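/- Let E be a finite-dimensional real inner product space, Ψ : E → ℝ continuously differentiable, and let (zᵗ)_{t∈ℕ} ⊂ E be a bounded sequence. Let a, b > 0 and assume for every t: (H1) Ψ(zᵗ) − Ψ(z^{t+1}) ≥ a‖z^{t+1} − zᵗ‖² and (H2) ‖∇Ψ(z^{t+1})‖ ≤ b‖z^{t+1} − zᵗ‖. Let Ψ* := lim_t Ψ(zᵗ) (which exists), and suppose there are μ > 0 and a continuous concave function φ : [0, μ) → [0, ∞) with φ(0) = 0, differentiable on (0, μ) with φ' > 0, such that Ψ(zᵗ) − Ψ* < μ for all t and φ'(Ψ(zᵗ) − Ψ*)·‖∇Ψ(zᵗ)‖ ≥ 1 for every t with Ψ(zᵗ) > Ψ*. Then ∑_{t=0}^{∞} ‖z^{t+1} − zᵗ‖ < ∞; in particular (zᵗ) is a Cauchy sequence and converges to a point z* with ∇Ψ(z*) = 0. (Theorem 1 of the paper in the setting where the objective is continuously differentiable, so that the limiting subdifferential reduces to the gradient: the IPAD iterates form a Cauchy sequence converging to a critical point.) -/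

import Mathlib

/-!
Sufficient decrease makes `r t = Ψ(zᵗ) - Ψ*` nonincreasing with limit `0`, hence nonnegative.
Writing `dₜ = ‖z^{t+1} - zᵗ‖`, concavity of the desingularizing function `φ`, the KL inequality at
`z^{t+1}` and the relative-error bound give `a d_{t+1}² ≤ (φ(r_{t+1}) - φ(r_{t+2})) · b dₜ`, and by
AM-GM `2 d_{t+1} ≤ dₜ + (b / a)(φ(r_{t+1}) - φ(r_{t+2}))`. Summing, the `φ`-terms telescope, so the
partial sums of `d` are bounded: the iterates have finite length, hence converge, and the
relative-error bound forces the gradient to vanish at the limit.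
-/

open Filter Topology Set

theorem ConcaveOn.mul_sub_le_sub_of_hasDerivAt {s : Set ℝ} {f : ℝ → ℝ} {f' x y : ℝ}
    (hf : ConcaveOn ℝ s f) (hx : x ∈ s) (hy : y ∈ s) (hyx : y ≤ x) (hd : HasDerivAt f f' x) :
    f' * (x - y) ≤ f x - f y := by
  rcases hyx.eq_or_lt with rfl | hlt
  · simp
  · have hslope := hf.le_slope_of_hasDerivAt hy hx hlt hd
    rwa [slope_def_field, le_div_iff₀ (sub_pos.mpr hlt)] at hslope

theorem summable_of_two_mul_succ_le {d ψ : ℕ → ℝ} (hd : ∀ t, 0 ≤ d t) (hψ : ∀ t, 0 ≤ ψ t)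
    (h : ∀ t, 2 * d (t + 1) ≤ d t + (ψ t - ψ (t + 1))) : Summable d := by
  refine summable_of_sum_range_le hd (c := 2 * d 0 + ψ 0) fun N => ?_
  have hsum : 2 * ∑ t ∈ Finset.range N, d (t + 1)
      ≤ ∑ t ∈ Finset.range N, d t + (ψ 0 - ψ N) := by
    rw [Finset.mul_sum, ← Finset.sum_range_sub', ← Finset.sum_add_distrib]
    exact Finset.sum_le_sum fun t _ => h t
  have hshift := Finset.sum_range_succ' d N
  have hlast := Finset.sum_range_succ d N
  linarith [hd N, hψ N]

section KurdykaLojasiewicz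

variable {a b μ : ℝ} {φ φ' : ℝ → ℝ}

/-- One step of the finite-length argument, with `rᵢ = Ψ(z^{t+i}) - Ψ*`, `dᵢ = ‖z^{t+i+1} - z^{t+i}‖`
and `g₁ = ‖∇Ψ(z^{t+1})‖`. -/
theorem two_mul_le_of_kl {r₁ r₂ d₀ d₁ g₁ : ℝ} (ha : 0 < a) (hb : 0 < b)
    (hconc : ConcaveOn ℝ (Ico 0 μ) φ) (hderiv : ∀ s ∈ Ioo 0 μ, HasDerivAt φ (φ' s) s)
    (hφ'pos : ∀ s ∈ Ioo 0 μ, 0 < φ' s) (hr₁ : r₁ ∈ Ico 0 μ) (hr₂ : r₂ ∈ Ico 0 μ)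
    (hd₀ : 0 ≤ d₀) (hdecr : a * d₁ ^ 2 ≤ r₁ - r₂) (hrel : g₁ ≤ b * d₀)
    (hKL : 0 < r₁ → 1 ≤ φ' r₁ * g₁) :
    2 * d₁ ≤ d₀ + b / a * (φ r₁ - φ r₂) := by
  have hsq : 0 ≤ a * d₁ ^ 2 := by positivity
  rcases hr₁.1.eq_or_lt with hr₁0 | hr₁pos
  · have hr₂0 : r₂ = 0 := by linarith [hr₂.1]
    have hd₁ : d₁ = 0 := by
      have : d₁ ^ 2 = 0 := by nlinarith
      exact pow_eq_zero_iff two_ne_zero |>.mp this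
    simp [← hr₁0, hr₂0, hd₁, hd₀]
  · have hr₁' : r₁ ∈ Ioo 0 μ := ⟨hr₁pos, hr₁.2⟩
    have hp := hφ'pos r₁ hr₁'
    have htan : φ' r₁ * (r₁ - r₂) ≤ φ r₁ - φ r₂ :=
      hconc.mul_sub_le_sub_of_hasDerivAt hr₁ hr₂ (by linarith) (hderiv r₁ hr₁')
    have hKL' : 1 ≤ φ' r₁ * (b * d₀) :=
      (hKL hr₁pos).trans (mul_le_mul_of_nonneg_left hrel hp.le)
    have hφdiff : 0 ≤ φ r₁ - φ r₂ := le_trans (mul_nonneg hp.le (hsq.trans hdecr)) htan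
    have hmain : a * d₁ ^ 2 ≤ a * (d₀ * (b / a * (φ r₁ - φ r₂))) := calc
      a * d₁ ^ 2 ≤ (r₁ - r₂) * (φ' r₁ * (b * d₀)) :=
        hdecr.trans (le_mul_of_one_le_right (hsq.trans hdecr) hKL')
      _ = φ' r₁ * (r₁ - r₂) * (b * d₀) := by ring
      _ ≤ (φ r₁ - φ r₂) * (b * d₀) := by gcongr
      _ = a * (d₀ * (b / a * (φ r₁ - φ r₂))) := by field_simp
    exact two_mul_le_add_of_sq_le_mul hd₀ (by positivity) (le_of_mul_le_mul_left hmain ha)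

theorem summable_of_kl {r d g : ℕ → ℝ} (ha : 0 < a) (hb : 0 < b)
    (hconc : ConcaveOn ℝ (Ico 0 μ) φ) (hφnn : ∀ s ∈ Ico 0 μ, 0 ≤ φ s)
    (hderiv : ∀ s ∈ Ioo 0 μ, HasDerivAt φ (φ' s) s) (hφ'pos : ∀ s ∈ Ioo 0 μ, 0 < φ' s)
    (hr : ∀ t, r t ∈ Ico 0 μ) (hd : ∀ t, 0 ≤ d t)
    (hdecr : ∀ t, a * d t ^ 2 ≤ r t - r (t + 1)) (hrel : ∀ t, g (t + 1) ≤ b * d t)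
    (hKL : ∀ t, 0 < r t → 1 ≤ φ' (r t) * g t) :
    Summable d := by
  refine summable_of_two_mul_succ_le hd (ψ := fun t => b / a * φ (r (t + 1)))
    (fun t => mul_nonneg (by positivity) (hφnn _ (hr _))) fun t => ?_
  rw [← mul_sub]
  exact two_mul_le_of_kl ha hb hconc hderiv hφ'pos (hr _) (hr _) (hd t) (hdecr _) (hrel t)
    (hKL _)

end KurdykaLojasiewicz

theorem stmt_13_general {E : Type*} [NormedAddCommGroup E] [InnerProductSpace ℝ E]
    [FiniteDimensional ℝ E]
    (Ψ : E → ℝ) (hΨ : ContDiff ℝ 1 Ψ)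
    (z : ℕ → E)
    (a b : ℝ) (ha : 0 < a) (hb : 0 < b)
    (H1 : ∀ t : ℕ, Ψ (z t) - Ψ (z (t + 1)) ≥ a * ‖z (t + 1) - z t‖ ^ 2)
    (H2 : ∀ t : ℕ, ‖gradient Ψ (z (t + 1))‖ ≤ b * ‖z (t + 1) - z t‖)
    (Ψstar : ℝ) (hlim : Tendsto (fun t => Ψ (z t)) atTop (nhds Ψstar))
    (μ : ℝ) (φ φ' : ℝ → ℝ)
    (hconc : ConcaveOn ℝ (Set.Ico 0 μ) φ)
    (hφnn : ∀ s ∈ Set.Ico (0 : ℝ) μ, 0 ≤ φ s)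
    (hderiv : ∀ s ∈ Set.Ioo (0 : ℝ) μ, HasDerivAt φ (φ' s) s)
    (hφ'pos : ∀ s ∈ Set.Ioo (0 : ℝ) μ, 0 < φ' s)
    (hμt : ∀ t : ℕ, Ψ (z t) - Ψstar < μ)
    (hKL : ∀ t : ℕ, Ψ (z t) > Ψstar →
      φ' (Ψ (z t) - Ψstar) * ‖gradient Ψ (z t)‖ ≥ 1) :
    Summable (fun t : ℕ => ‖z (t + 1) - z t‖) ∧ CauchySeq z ∧
      ∃ zstar : E, Tendsto z atTop (nhds zstar) ∧ gradient Ψ zstar = 0 := by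
  have hanti : Antitone fun t => Ψ (z t) :=
    antitone_nat_of_succ_le fun t => by nlinarith [H1 t, sq_nonneg ‖z (t + 1) - z t‖]
  have hsum : Summable fun t => ‖z (t + 1) - z t‖ :=
    summable_of_kl ha hb hconc hφnn hderiv hφ'pos
      (fun t => ⟨sub_nonneg.mpr (hanti.le_of_tendsto hlim t), hμt t⟩) (fun t => norm_nonneg _)
      (fun t => by linarith [H1 t]) H2 (fun t ht => hKL t (sub_pos.mp ht))
  have hcauchy : CauchySeq z :=
    cauchySeq_of_summable_dist (by simpa only [dist_eq_norm'] using hsum)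
  obtain ⟨zstar, hz⟩ := cauchySeq_tendsto_of_complete hcauchy
  have hgrad : Continuous (gradient Ψ) :=
    (InnerProductSpace.toDual ℝ E).symm.continuous.comp (hΨ.continuous_fderiv one_ne_zero)
  have hto_grad : Tendsto (fun t => gradient Ψ (z (t + 1))) atTop (𝓝 (gradient Ψ zstar)) :=
    ((hgrad.tendsto zstar).comp hz).comp (tendsto_add_atTop_nat 1)
  have hto_zero : Tendsto (fun t => gradient Ψ (z (t + 1))) atTop (𝓝 0) := by
    refine tendsto_zero_iff_norm_tendsto_zero.mpr
      (squeeze_zero (fun t => norm_nonneg _) H2 ?_)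
    simpa using hsum.tendsto_atTop_zero.const_mul b
  exact ⟨hsum, hcauchy, zstar, hz, tendsto_nhds_unique hto_grad hto_zero⟩

/-- Theorem 1 of the paper in the continuously differentiable setting: under sufficient
decrease, relative error and the Kurdyka–Łojasiewicz inequality, the IPAD iterates have
finite length, form a Cauchy sequence and converge to a critical point of Ψ. -/
theorem stmt_13 {E : Type*} [NormedAddCommGroup E] [InnerProductSpace ℝ E]
    [FiniteDimensional ℝ E]
    (Ψ : E → ℝ) (hΨ : ContDiff ℝ 1 Ψ)
    (z : ℕ → E) (hbdd : ∃ B : ℝ, ∀ t : ℕ, ‖z t‖ ≤ B)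
    (a b : ℝ) (ha : 0 < a) (hb : 0 < b)
    (H1 : ∀ t : ℕ, Ψ (z t) - Ψ (z (t + 1)) ≥ a * ‖z (t + 1) - z t‖ ^ 2)
    (H2 : ∀ t : ℕ, ‖gradient Ψ (z (t + 1))‖ ≤ b * ‖z (t + 1) - z t‖)
    (Ψstar : ℝ) (hlim : Tendsto (fun t => Ψ (z t)) atTop (nhds Ψstar))
    (μ : ℝ) (hμ : 0 < μ) (φ φ' : ℝ → ℝ)
    (hcont : ContinuousOn φ (Set.Ico 0 μ))
    (hconc : ConcaveOn ℝ (Set.Ico 0 μ) φ)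
    (hφ0 : φ 0 = 0) (hφnn : ∀ s ∈ Set.Ico (0 : ℝ) μ, 0 ≤ φ s)
    (hderiv : ∀ s ∈ Set.Ioo (0 : ℝ) μ, HasDerivAt φ (φ' s) s)
    (hφ'pos : ∀ s ∈ Set.Ioo (0 : ℝ) μ, 0 < φ' s)
    (hμt : ∀ t : ℕ, Ψ (z t) - Ψstar < μ)
    (hKL : ∀ t : ℕ, Ψ (z t) > Ψstar →
      φ' (Ψ (z t) - Ψstar) * ‖gradient Ψ (z t)‖ ≥ 1) :
    Summable (fun t : ℕ => ‖z (t + 1) - z t‖) ∧ CauchySeq z ∧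
      ∃ zstar : E, Tendsto z atTop (nhds zstar) ∧ gradient Ψ zstar = 0 :=
  stmt_13_general Ψ hΨ z a b ha hb H1 H2 Ψstar hlim μ φ φ' hconc hφnn hderiv hφ'pos hμt hKL
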